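/- Let ω be a primitive m-th root of unity and α, β elements of a lattice Q with isometry ν of order m. Define ζ(α) = ζ'(α)·2^{⟨α,ν^{m/2}α⟩/2} if m is even and ζ(α) = ζ'(α) if m is odd, where ζ'(α) = ∏_{0<p<m/2} (1 − ω^p)^{⟨α,ν^p α⟩}, and define ε'(α,β) = ∏_{−m/2<p<0} (−ω^p)^{⟨α,ν^p β⟩}. Then ζ(α)ζ(β) ε'(α, ν^r β)^{−1} ζ(α + ν^r β)^{−1} = ∏_{0<p<m} (1 − ω^p)^{−⟨α, ν^{p+r} β⟩} for all r ∈ ℤ_m. -/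

import Mathlib

open Finset

/-- The standard bilinear form on `ℤ^N`. -/
def form {N : ℕ} (α β : Fin N → ℤ) : ℤ := ∑ k, α k * β k

/-- `ζ(α) = ζ'(α)·2^{⟨α,ν^{m/2}α⟩/2}` when `m` is even and `ζ(α) = ζ'(α)` when `m` is
odd, where `ζ'(α) = ∏_{0<p<m/2}(1 − ω^p)^{⟨α,ν^pα⟩}`. -/
noncomputable def zeta (N m : ℕ) (ω : ℂ) (ν : AddAut (Fin N → ℤ))
    (α : Fin N → ℤ) : ℂ :=
  (∏ p ∈ (Finset.range m).filter (fun p => 0 < p ∧ 2 * p < m),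
      (1 - ω ^ p) ^ form α ((p • ν) α)) *
    (if Even m then (2 : ℂ) ^ (form α (((m / 2) • ν) α) / 2) else 1)

/-- `ε'(α,β) = ∏_{−m/2<p<0} (−ω^p)^{⟨α,ν^pβ⟩}`. -/
noncomputable def epsPrime (N m : ℕ) (ω : ℂ) (ν : AddAut (Fin N → ℤ))
    (α β : Fin N → ℤ) : ℂ :=
  ∏ p ∈ (Finset.range m).filter (fun p => 0 < p ∧ 2 * p < m),
    (-ω ^ (-(p : ℤ))) ^ form α (((-(p : ℤ)) • ν) β)

/-!
Put `γ = ν^r β` and `g(k) = ⟨α, ν^k γ⟩`. Since `ν^r` is an isometry commuting with `ν`,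
`ζ(γ) = ζ(β)`. The exponents `⟨x, ν^p x⟩` are quadratic in `x`, and because `ν` is an isometry
of order `m` the cross term `⟨γ, ν^p α⟩` equals `g(m - p)`; hence
`ζ(α + γ) = ζ(α) ζ(γ) ∏_{0<p<m/2} (1 - ω^p)^{g(p) + g(m-p)} · 2^{g(m/2)}`
(the last factor only for even `m`, where the two cross terms coincide and cancel the halving).
The left side is thus the inverse of `ε'(α, γ)` times this correction factor, and the identities
`(-ω^{-p})(1 - ω^p) = 1 - ω^{m-p}` and `1 - ω^{m/2} = 2` fold the two into
`∏_{0<p<m} (1 - ω^p)^{g(p)}`.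
-/

section RootsOfUnity

variable {K : Type*} [Field K] {ω : K} {m : ℕ}

theorem prod_Ioo_eq_prod_mul_prod_sub {M : Type*} [CommMonoid M] (hm : 0 < m) (F : ℕ → M) :
    ∏ p ∈ Ioo 0 m, F p =
      (∏ p ∈ (range m).filter (fun p => 0 < p ∧ 2 * p < m), F p * F (m - p)) *
        if Even m then F (m / 2) else 1 := by
  have hupper : ∏ p ∈ (range m).filter (fun p => 0 < p ∧ 2 * p < m), F (m - p) =
      ∏ p ∈ (range m).filter (fun p => 0 < p ∧ m < 2 * p), F p := by
    refine prod_nbij' (m - ·) (m - ·) ?_ ?_ ?_ ?_ fun _ _ => rfl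
    all_goals intro a ha; simp only [mem_filter, mem_range] at ha ⊢; omega
  have hmiddle : ∏ p ∈ (range m).filter (fun p => 0 < p ∧ 2 * p = m), F p =
      if Even m then F (m / 2) else 1 := by
    split_ifs with he
    · obtain ⟨k, rfl⟩ := he
      rw [← prod_singleton F ((k + k) / 2)]
      congr 1
      ext p; simp only [mem_filter, mem_range, mem_singleton]; omega
    · rw [← prod_empty (f := F)]
      congr 1
      ext p; simp only [mem_filter, mem_range, notMem_empty, iff_false]
      exact fun hp => he ⟨p, by omega⟩
  rw [prod_mul_distrib, hupper, ← hmiddle, ← prod_union, ← prod_union]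
  · congr 1; ext p; simp only [mem_Ioo, mem_union, mem_filter, mem_range]; omega
  all_goals
    rw [disjoint_left]
    intro a ha
    simp only [mem_union, mem_filter, mem_range] at ha ⊢
    omega

theorem IsPrimitiveRoot.one_sub_pow_ne_zero (hω : IsPrimitiveRoot ω m) {p : ℕ} (hp : 0 < p)
    (hpm : p < m) : 1 - ω ^ p ≠ 0 :=
  sub_ne_zero.2 (hω.pow_ne_one_of_pos_of_lt hp.ne' hpm).symm

theorem one_sub_pow_sub (hω0 : ω ≠ 0) (hω : ω ^ m = 1) {p : ℕ} (hp : p ≤ m) :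
    1 - ω ^ (m - p) = -ω ^ (-(p : ℤ)) * (1 - ω ^ p) := by
  have hinv : ω ^ (m - p) = ω ^ (-(p : ℤ)) := by
    rw [← zpow_natCast, Nat.cast_sub hp, sub_eq_neg_add, zpow_add₀ hω0, zpow_natCast, hω,
      mul_one]
  rw [hinv, zpow_neg, zpow_natCast]
  field_simp
  ring

theorem IsPrimitiveRoot.pow_div_two_eq_neg_one (hω : IsPrimitiveRoot ω m) (hm : 0 < m)
    (he : Even m) : ω ^ (m / 2) = -1 := by
  obtain ⟨k, rfl⟩ := he
  have hk : 0 < k := by omega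
  have hω2 := hω.pow_of_dvd hk.ne' ⟨2, by ring⟩
  rw [Nat.add_div_right k hk, Nat.div_self hk] at hω2
  rw [show (k + k) / 2 = k by omega, hω2.eq_neg_one_of_two_right]

theorem IsPrimitiveRoot.prod_Ioo_one_sub_pow_zpow (hω : IsPrimitiveRoot ω m) (hm : 0 < m)
    (e : ℕ → ℤ) :
    ∏ p ∈ Ioo 0 m, (1 - ω ^ p) ^ e p =
      (∏ p ∈ (range m).filter (fun p => 0 < p ∧ 2 * p < m), (-ω ^ (-(p : ℤ))) ^ e (m - p)) *
        (∏ p ∈ (range m).filter (fun p => 0 < p ∧ 2 * p < m),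
          (1 - ω ^ p) ^ (e p + e (m - p))) *
        if Even m then (2 : K) ^ e (m / 2) else 1 := by
  rw [prod_Ioo_eq_prod_mul_prod_sub hm, ← prod_mul_distrib]
  congr 1
  · refine prod_congr rfl fun p hp => ?_
    simp only [mem_filter, mem_range] at hp
    rw [one_sub_pow_sub (hω.ne_zero hm.ne') hω.pow_eq_one hp.1.le, mul_zpow,
      zpow_add₀ (hω.one_sub_pow_ne_zero hp.2.1 hp.1)]
    ring
  · split_ifs with he
    · rw [hω.pow_div_two_eq_neg_one hm he]
      norm_num
    · rfl

end RootsOfUnity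

section Lattice

variable {N : ℕ}

theorem form_comm (a b : Fin N → ℤ) : form a b = form b a := dotProduct_comm a b

theorem form_add_left (a b c : Fin N → ℤ) : form (a + b) c = form a c + form b c :=
  add_dotProduct a b c

theorem form_add_right (a b c : Fin N → ℤ) : form a (b + c) = form a b + form a c :=
  dotProduct_add a b c

theorem form_add_apply_add (σ : AddAut (Fin N → ℤ)) (a b : Fin N → ℤ) :
    form (a + b) (σ (a + b)) = form a (σ a) + form b (σ b) + (form a (σ b) + form b (σ a)) := by
  rw [map_add, form_add_left, form_add_right, form_add_right]
  ring

def isometryAddSubgroup (N : ℕ) : AddSubgroup (AddAut (Fin N → ℤ)) where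
  carrier := {σ | ∀ a b, form (σ a) (σ b) = form a b}
  add_mem' {_ τ} hσ hτ a b := (hσ (τ a) (τ b)).trans (hτ a b)
  zero_mem' _ _ := rfl
  neg_mem' {σ} hσ a b := by simpa using (hσ ((-σ) a) ((-σ) b)).symm

theorem neg_natCast_zsmul_eq_sub_nsmul {G : Type*} [AddGroup G] {g : G} {m p : ℕ}
    (hg : m • g = 0) (hp : p ≤ m) : (-(p : ℤ)) • g = (m - p) • g := by
  rw [← natCast_zsmul, Nat.cast_sub hp, sub_zsmul, natCast_zsmul, hg, zero_add, neg_zsmul]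

variable {ν : AddAut (Fin N → ℤ)}

theorem form_nsmul_apply_nsmul_apply_self (hν : ν ∈ isometryAddSubgroup N) (r p : ℕ)
    (β : Fin N → ℤ) :
    form ((r • ν) β) ((p • ν) ((r • ν) β)) = form β ((p • ν) β) := by
  have hcomm : (p • ν) ((r • ν) β) = (r • ν) ((p • ν) β) := by
    rw [← AddAut.add_apply, ← add_nsmul, add_comm, add_nsmul, AddAut.add_apply]
  rw [hcomm]
  exact nsmul_mem hν r β ((p • ν) β)

theorem form_nsmul_apply_swap (hν : ν ∈ isometryAddSubgroup N) {m p : ℕ} (hord : m • ν = 0)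
    (hp : p ≤ m) (α γ : Fin N → ℤ) :
    form γ ((p • ν) α) = form α (((m - p) • ν) γ) := by
  have hγ : γ = (p • ν) (((m - p) • ν) γ) := by
    rw [← AddAut.add_apply, ← add_nsmul, Nat.add_sub_cancel' hp, hord]
    rfl
  conv_lhs => rw [form_comm, hγ]
  exact nsmul_mem hν p α _

end Lattice

section Zeta

variable {N m : ℕ} {ω : ℂ} {ν : AddAut (Fin N → ℤ)}

theorem zeta_ne_zero (hω : IsPrimitiveRoot ω m) (α : Fin N → ℤ) : zeta N m ω ν α ≠ 0 := by
  refine mul_ne_zero (prod_ne_zero_iff.2 fun p hp => zpow_ne_zero _ ?_) ?_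
  · simp only [mem_filter, mem_range] at hp
    exact hω.one_sub_pow_ne_zero hp.2.1 hp.1
  · split_ifs
    exacts [zpow_ne_zero _ two_ne_zero, one_ne_zero]

theorem zeta_nsmul_apply (hν : ν ∈ isometryAddSubgroup N) (r : ℕ) (β : Fin N → ℤ) :
    zeta N m ω ν ((r • ν) β) = zeta N m ω ν β := by
  simp only [zeta, form_nsmul_apply_nsmul_apply_self hν]

theorem epsPrime_eq_prod_sub (hord : m • ν = 0) (α γ : Fin N → ℤ) :
    epsPrime N m ω ν α γ = ∏ p ∈ (range m).filter (fun p => 0 < p ∧ 2 * p < m),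
      (-ω ^ (-(p : ℤ))) ^ form α (((m - p) • ν) γ) := by
  refine prod_congr rfl fun p hp => ?_
  simp only [mem_filter, mem_range] at hp
  rw [neg_natCast_zsmul_eq_sub_nsmul hord hp.1.le]

theorem zeta_add (hω : IsPrimitiveRoot ω m) (hν : ν ∈ isometryAddSubgroup N) (hord : m • ν = 0)
    {α γ : Fin N → ℤ} (hα : Even m → Even (form (((m / 2) • ν) α) α))
    (hγ : Even m → Even (form (((m / 2) • ν) γ) γ)) :
    zeta N m ω ν (α + γ) = zeta N m ω ν α * zeta N m ω ν γ *
      (∏ p ∈ (range m).filter (fun p => 0 < p ∧ 2 * p < m),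
        (1 - ω ^ p) ^ (form α ((p • ν) γ) + form α (((m - p) • ν) γ))) *
      if Even m then (2 : ℂ) ^ form α (((m / 2) • ν) γ) else 1 := by
  have hprod : ∏ p ∈ (range m).filter (fun p => 0 < p ∧ 2 * p < m),
        (1 - ω ^ p) ^ form (α + γ) ((p • ν) (α + γ)) =
      (∏ p ∈ (range m).filter (fun p => 0 < p ∧ 2 * p < m), (1 - ω ^ p) ^ form α ((p • ν) α)) *
        (∏ p ∈ (range m).filter (fun p => 0 < p ∧ 2 * p < m), (1 - ω ^ p) ^ form γ ((p • ν) γ)) *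
        ∏ p ∈ (range m).filter (fun p => 0 < p ∧ 2 * p < m),
          (1 - ω ^ p) ^ (form α ((p • ν) γ) + form α (((m - p) • ν) γ)) := by
    rw [← prod_mul_distrib, ← prod_mul_distrib]
    refine prod_congr rfl fun p hp => ?_
    simp only [mem_filter, mem_range] at hp
    have hne := hω.one_sub_pow_ne_zero hp.2.1 hp.1
    rw [form_add_apply_add, form_nsmul_apply_swap hν hord hp.1.le α γ, zpow_add₀ hne,
      zpow_add₀ hne]
  have hmiddle : (if Even m then (2 : ℂ) ^ (form (α + γ) (((m / 2) • ν) (α + γ)) / 2) else 1) =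
      (if Even m then (2 : ℂ) ^ (form α (((m / 2) • ν) α) / 2) else 1) *
        (if Even m then (2 : ℂ) ^ (form γ (((m / 2) • ν) γ) / 2) else 1) *
        if Even m then (2 : ℂ) ^ form α (((m / 2) • ν) γ) else 1 := by
    split_ifs with he
    · obtain ⟨a, ha⟩ := hα he
      obtain ⟨c, hc⟩ := hγ he
      have hhalf : m - m / 2 = m / 2 := by obtain ⟨k, rfl⟩ := he; omega
      rw [form_add_apply_add, form_nsmul_apply_swap hν hord (Nat.div_le_self m 2) α γ, hhalf,
        form_comm α, form_comm γ, ha, hc, ← zpow_add₀ two_ne_zero, ← zpow_add₀ two_ne_zero]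
      congr 1
      omega
    · simp
  rw [zeta, zeta, zeta, hprod, hmiddle]
  ring

end Zeta

theorem zeta_epsPrime_identity_general (N m : ℕ) (hm : 0 < m) (ω : ℂ)
    (hω : IsPrimitiveRoot ω m)
    (Q : AddSubgroup (Fin N → ℤ))
    (ν : AddAut (Fin N → ℤ))
    (hiso : ∀ α β, form (ν α) (ν β) = form α β)
    (hord : m • ν = 0)
    (hA5 : Even m → ∀ α ∈ Q, Even (form (((m / 2) • ν) α) α))
    (α : Fin N → ℤ) (hα : α ∈ Q) (β : Fin N → ℤ) (hβ : β ∈ Q) (r : ℕ) :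
    zeta N m ω ν α * zeta N m ω ν β * (epsPrime N m ω ν α ((r • ν) β))⁻¹ *
        (zeta N m ω ν (α + (r • ν) β))⁻¹
      = ∏ p ∈ Finset.Ioo 0 m, (1 - ω ^ p) ^ (-(form α (((p + r) • ν) β))) := by
  set γ := (r • ν) β
  have hγ : Even m → Even (form (((m / 2) • ν) γ) γ) := fun he => by
    rw [form_comm, form_nsmul_apply_nsmul_apply_self hiso, form_comm]
    exact hA5 he β hβ
  have hζγ : zeta N m ω ν γ = zeta N m ω ν β := zeta_nsmul_apply hiso r β
  have hshift (p : ℕ) : form α (((p + r) • ν) β) = form α ((p • ν) γ) := by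
    rw [add_nsmul]
    rfl
  simp_rw [hshift, zpow_neg]
  rw [prod_inv_distrib, hω.prod_Ioo_one_sub_pow_zpow hm, zeta_add hω hiso hord (hA5 · α hα) hγ,
    hζγ, epsPrime_eq_prod_sub hord]
  have hζα := zeta_ne_zero (ν := ν) hω α
  have hζβ := zeta_ne_zero (ν := ν) hω β
  field_simp

/-- Lemma 5.4 (eq. (4.7)):
`ζ(α)ζ(β) ε'(α,ν^rβ)⁻¹ ζ(α+ν^rβ)⁻¹ = ∏_{0<p<m} (1 − ω^p)^{−⟨α,ν^{p+r}β⟩}`. -/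
theorem zeta_epsPrime_identity (N m : ℕ) (hm : 0 < m) (ω : ℂ)
    (hω : IsPrimitiveRoot ω m)
    (Q : AddSubgroup (Fin N → ℤ))
    (hQeven : ∀ α ∈ Q, Even (form α α))
    (ν : AddAut (Fin N → ℤ))
    (hiso : ∀ α β, form (ν α) (ν β) = form α β)
    (hνQ : ∀ α ∈ Q, ν α ∈ Q)
    (hord : m • ν = 0)
    (hA5 : Even m → ∀ α ∈ Q, Even (form (((m / 2) • ν) α) α))
    (α : Fin N → ℤ) (hα : α ∈ Q) (β : Fin N → ℤ) (hβ : β ∈ Q) (r : ℕ) (hr : r < m) :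
    zeta N m ω ν α * zeta N m ω ν β * (epsPrime N m ω ν α ((r • ν) β))⁻¹ *
        (zeta N m ω ν (α + (r • ν) β))⁻¹
      = ∏ p ∈ Finset.Ioo 0 m, (1 - ω ^ p) ^ (-(form α (((p + r) • ν) β))) :=
  zeta_epsPrime_identity_general N m hm ω hω Q ν hiso hord hA5 α hα β hβ r
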